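/- Let μ, ν ∈ 𝓜. The following are equivalent: (i) μ ≤_pcd ν; (ii) there exists η ∈ 𝓜 with μ ≤_cd η and η(A) ≤ ν(A) for all Borel A ⊆ ℝ; (iii) there exists χ ∈ 𝓜 with μ(A) ≤ χ(A) for all Borel A ⊆ ℝ and χ ≤_cd ν. -/

import Mathlib

/-!
For (i) ⇒ (ii), let `η` be the leftmost part of `ν` of mass `μ(ℝ)` (testing `≤_pcd` against `1`
gives `μ(ℝ) ≤ ν(ℝ)`): `ν` on `(-∞, q)` plus an atom at `q`. For convex non-increasing `f` whose
tangent line at `q` has slope `s ≤ 0`, `f ≤ f ∘ min(·, q) = f(q) - s (q - x)⁺ + g`, where the gap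
`g` between `f ∘ min(·, q)` and the tangent line is nonnegative, convex, non-increasing and vanishes
on `[q, ∞)`. So `(q - x)⁺` and `g` are test functions for `≤_pcd` whose integrals against `ν` and
`η` coincide, the constant is matched by `η(ℝ) = μ(ℝ)`, and `f ∘ min(·, q) = f` `η`-a.e. When
`ν(ℝ) = μ(ℝ)`, take `η = ν` and truncate `f` from below instead.

(ii) ⇒ (i) is immediate and `χ = μ + (ν - η)` gives (ii) ⇒ (iii). For (iii) ⇒ (i), `f` need not be
`χ`-integrable, so it is first replaced by its continuation to the left of `b` along a tangent line,
and then `b → -∞`.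
-/

open MeasureTheory Set Filter

noncomputable section

/-- `η ∈ 𝓜`: a finite Borel measure on ℝ with finite first moment. -/
def MemM (η : MeasureTheory.Measure ℝ) : Prop :=
  MeasureTheory.IsFiniteMeasure η ∧ MeasureTheory.Integrable (fun x : ℝ => x) η

/-- Convex-decreasing order `≤_cd`. -/
def LeCD (η χ : MeasureTheory.Measure ℝ) : Prop :=
  ∀ f : ℝ → ℝ, ConvexOn ℝ Set.univ f → Antitone f →
    MeasureTheory.Integrable f η → MeasureTheory.Integrable f χ →
    ∫ x, f x ∂η ≤ ∫ x, f x ∂χ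

/-- Positive convex-decreasing order `≤_pcd`. -/
def LePCD (η χ : MeasureTheory.Measure ℝ) : Prop :=
  ∀ f : ℝ → ℝ, (∀ x, 0 ≤ f x) → ConvexOn ℝ Set.univ f → Antitone f →
    MeasureTheory.Integrable f η → MeasureTheory.Integrable f χ →
    ∫ x, f x ∂η ≤ ∫ x, f x ∂χ

/-- Positive convex order `≤_pc`. -/
def LePC (η χ : MeasureTheory.Measure ℝ) : Prop :=
  ∀ f : ℝ → ℝ, (∀ x, 0 ≤ f x) → ConvexOn ℝ Set.univ f →
    MeasureTheory.Integrable f η → MeasureTheory.Integrable f χ →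
    ∫ x, f x ∂η ≤ ∫ x, f x ∂χ

/-- A supermartingale coupling of `η` and `χ`. -/
def IsSupermartingaleCoupling (η χ : MeasureTheory.Measure ℝ)
    (π : MeasureTheory.Measure (ℝ × ℝ)) : Prop :=
  MeasureTheory.IsProbabilityMeasure π ∧
  π.map Prod.fst = η ∧ π.map Prod.snd = χ ∧
  MeasureTheory.Integrable (fun p : ℝ × ℝ => p.2) π ∧
  ∀ B : Set ℝ, MeasurableSet B →
    ∫ p in B ×ˢ (Set.univ : Set ℝ), (p : ℝ × ℝ).2 ∂π ≤ ∫ x in B, x ∂η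

/-- The potential function `P_η(k) = ∫ (k-x)⁺ η(dx)`. -/
def Ppot (η : MeasureTheory.Measure ℝ) (k : ℝ) : ℝ := ∫ x, max (k - x) 0 ∂η

/-- The potential function `C_η(k) = ∫ (x-k)⁺ η(dx)`. -/
def Cpot (η : MeasureTheory.Measure ℝ) (k : ℝ) : ℝ := ∫ x, max (x - k) 0 ∂η

/-- The left-continuous quantile function `G_η(u) = sup {k | η((-∞,k]) < u}`. -/
def quantile (η : MeasureTheory.Measure ℝ) (u : ℝ) : ℝ :=
  sSup {k : ℝ | (η (Set.Iic k)).toReal < u}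

/-- The lift `μ_u = μ|_{(-∞,G(u))} + (u - μ((-∞,G(u)))) δ_{G(u)}`, with `μ_0 = 0`, `μ_1 = μ`. -/
def muU (μ : MeasureTheory.Measure ℝ) (u : ℝ) : MeasureTheory.Measure ℝ :=
  if u ≤ 0 then 0
  else if 1 ≤ u then μ
  else μ.restrict (Set.Iio (quantile μ u)) +
    (ENNReal.ofReal (u - (μ (Set.Iio (quantile μ u))).toReal)) •
      MeasureTheory.Measure.dirac (quantile μ u)

/-- `S` is a shadow of `μ` in `ν`. -/
def IsShadow (μ ν S : MeasureTheory.Measure ℝ) : Prop :=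
  MemM S ∧ LeCD μ S ∧ (∀ A : Set ℝ, MeasurableSet A → S A ≤ ν A) ∧
  ∀ η : MeasureTheory.Measure ℝ, MemM η → LeCD μ η →
    (∀ A : Set ℝ, MeasurableSet A → η A ≤ ν A) → LeCD S η

/-- `h` is the convex hull of `f`. -/
def IsConvexHullFn (f h : ℝ → ℝ) : Prop :=
  ConvexOn ℝ Set.univ h ∧ (∀ x, h x ≤ f x) ∧
  ∀ g : ℝ → ℝ, ConvexOn ℝ Set.univ g → (∀ x, g x ≤ f x) → ∀ x, g x ≤ h x

/-- The class `𝒟(a,b)`. -/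
def MemD (a b : ℝ) (f : ℝ → ℝ) : Prop :=
  (∀ x, 0 ≤ f x) ∧ Monotone f ∧ ConvexOn ℝ Set.univ f ∧
  Filter.Tendsto f Filter.atBot (nhds 0) ∧
  Filter.Tendsto (fun z => f z - (a * z - b)) Filter.atTop (nhds 0)

/-- The topological support of a measure. -/
def msupport (η : MeasureTheory.Measure ℝ) : Set ℝ :=
  {x : ℝ | ∀ U ∈ nhds x, η U ≠ 0}

open scoped ENNReal Topology

theorem ConvexOn.continuous {f : ℝ → ℝ} (hf : ConvexOn ℝ univ f) : Continuous f :=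
  continuousOn_univ.1 (hf.continuousOn isOpen_univ)

theorem ConvexOn.monotoneOn_of_isMinOn {s : Set ℝ} {h : ℝ → ℝ} {b : ℝ} (hh : ConvexOn ℝ s h)
    (hbs : b ∈ s) (hb : IsMinOn h s b) : MonotoneOn h (s ∩ Ici b) := fun x hx y hy hxy =>
  (hh.le_on_segment hbs hy.1 (by rw [segment_eq_Icc (hx.2.trans hxy)]; exact ⟨hx.2, hxy⟩)).trans
    (max_le (hb hy.1) le_rfl)

theorem ConvexOn.antitoneOn_of_isMinOn {s : Set ℝ} {h : ℝ → ℝ} {b : ℝ} (hh : ConvexOn ℝ s h)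
    (hbs : b ∈ s) (hb : IsMinOn h s b) : AntitoneOn h (s ∩ Iic b) := fun x hx y hy hxy =>
  (hh.le_on_segment hx.1 hbs (by rw [segment_eq_Icc (hxy.trans hy.2)]; exact ⟨hxy, hy.2⟩)).trans
    (max_le le_rfl (hb hx.1))

theorem ConvexOn.comp_max_of_isMinOn {h : ℝ → ℝ} {b : ℝ} (hh : ConvexOn ℝ univ h)
    (hb : IsMinOn h univ b) : ConvexOn ℝ univ fun x => h (max x b) := by
  have himage : (fun x => max x b) '' univ = Ici b :=
    Set.ext fun y => ⟨by rintro ⟨x, -, rfl⟩; exact le_max_right x b,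
      fun hy => ⟨y, mem_univ y, max_eq_left hy⟩⟩
  refine ConvexOn.comp (g := h) ?_ ((convexOn_id convex_univ).sup (convexOn_const b convex_univ)) ?_
  · rw [himage]; exact hh.subset (subset_univ _) (convex_Ici b)
  · rw [himage]; simpa using hh.monotoneOn_of_isMinOn (mem_univ b) hb

theorem ConvexOn.comp_min_of_isMinOn {h : ℝ → ℝ} {b : ℝ} (hh : ConvexOn ℝ univ h)
    (hb : IsMinOn h univ b) : ConvexOn ℝ univ fun x => h (min x b) := by
  have himage : (fun x => min x b) '' univ = Iic b :=
    Set.ext fun y => ⟨by rintro ⟨x, -, rfl⟩; exact min_le_right x b,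
      fun hy => ⟨y, mem_univ y, min_eq_left hy⟩⟩
  refine ConvexOn.comp_concaveOn (g := h) ?_
    ((concaveOn_id convex_univ).inf (concaveOn_const b convex_univ)) ?_
  · rw [himage]; exact hh.subset (subset_univ _) (convex_Iic b)
  · rw [himage]; simpa using hh.antitoneOn_of_isMinOn (mem_univ b) hb

section TangentGap

variable {f : ℝ → ℝ}

theorem ConvexOn.add_rightDeriv_mul_sub_le (hf : ConvexOn ℝ univ f) (b y : ℝ) :
    f b + derivWithin f (Ioi b) b * (y - b) ≤ f y := by
  have hb : b ∈ interior univ := by simp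
  rcases lt_trichotomy y b with hyb | rfl | hby
  · have h := (hf.slope_le_leftDeriv_of_mem_interior (mem_univ y) hb hyb).trans
      (hf.leftDeriv_le_rightDeriv_of_mem_interior hb)
    rw [slope_def_field, div_le_iff₀ (sub_pos.2 hyb)] at h
    linarith
  · simp
  · have h := hf.rightDeriv_le_slope_of_mem_interior hb (mem_univ y) hby
    rw [slope_def_field, le_div_iff₀ (sub_pos.2 hby)] at h
    linarith

def tangentGap (f : ℝ → ℝ) (b y : ℝ) : ℝ := f y - f b - derivWithin f (Ioi b) b * (y - b)

@[simp] theorem tangentGap_self (b : ℝ) : tangentGap f b b = 0 := by simp [tangentGap]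

theorem ConvexOn.tangentGap_nonneg (hf : ConvexOn ℝ univ f) (b y : ℝ) : 0 ≤ tangentGap f b y := by
  have := hf.add_rightDeriv_mul_sub_le b y
  simp only [tangentGap]
  linarith

theorem ConvexOn.isMinOn_tangentGap (hf : ConvexOn ℝ univ f) (b : ℝ) :
    IsMinOn (tangentGap f b) univ b := fun y _ => by simpa using hf.tangentGap_nonneg b y

theorem ConvexOn.convexOn_tangentGap (hf : ConvexOn ℝ univ f) (b : ℝ) :
    ConvexOn ℝ univ (tangentGap f b) := by
  refine ⟨convex_univ, fun x _ y _ p r hp hr hpr => ?_⟩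
  have := hf.2 (mem_univ x) (mem_univ y) hp hr hpr
  simp only [tangentGap, smul_eq_mul] at *
  linear_combination this + (f b - derivWithin f (Ioi b) b * b) * hpr

theorem comp_min_eq_add_tangentGap (f : ℝ → ℝ) (q x : ℝ) :
    f (min x q) = f q - derivWithin f (Ioi q) q * max (q - x) 0 + tangentGap f q (min x q) := by
  have : min x q - q = -max (q - x) 0 := by
    rcases le_total x q with hxq | hqx
    · simp [hxq]
    · simp [hqx]
  simp only [tangentGap, this]
  ring

theorem ConvexOn.antitone_tangentGap_min (hf : ConvexOn ℝ univ f) (q : ℝ) :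
    Antitone fun x => tangentGap f q (min x q) := fun x y hxy =>
  (hf.convexOn_tangentGap q).antitoneOn_of_isMinOn (mem_univ q) (hf.isMinOn_tangentGap q)
    ⟨mem_univ _, min_le_right x q⟩ ⟨mem_univ _, min_le_right y q⟩ (min_le_min_right q hxy)

theorem tangentGap_min_of_notMem_Iio {q x : ℝ} (hx : x ∉ Iio q) :
    tangentGap f q (min x q) = 0 := by
  rw [mem_Iio, not_lt] at hx
  simp [hx]

/-- `f` on `[b, ∞)`, continued to the left of `b` along its tangent line at `b`. Unlike `f`, it
grows at most linearly, hence is integrable against every measure in `𝓜`. -/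
def linearizeBelow (f : ℝ → ℝ) (b x : ℝ) : ℝ :=
  f (max x b) + derivWithin f (Ioi b) b * (min x b - b)

theorem linearizeBelow_of_le {b x : ℝ} (hx : b ≤ x) : linearizeBelow f b x = f x := by
  simp [linearizeBelow, hx]

theorem linearizeBelow_eq_add_tangentGap (b x : ℝ) :
    linearizeBelow f b x = f b + derivWithin f (Ioi b) b * (x - b) + tangentGap f b (max x b) := by
  have := min_add_max x b
  simp only [linearizeBelow, tangentGap]
  linear_combination derivWithin f (Ioi b) b * this

theorem ConvexOn.convexOn_linearizeBelow (hf : ConvexOn ℝ univ f) (b : ℝ) :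
    ConvexOn ℝ univ (linearizeBelow f b) := by
  have haffine : ConvexOn ℝ univ fun x => f b + derivWithin f (Ioi b) b * (x - b) :=
    ⟨convex_univ, fun x _ y _ p r _ _ hpr => le_of_eq <| by
      simp only [smul_eq_mul]
      linear_combination (derivWithin f (Ioi b) b * b - f b) * hpr⟩
  simp_rw [funext (linearizeBelow_eq_add_tangentGap (f := f) b)]
  exact haffine.add ((hf.convexOn_tangentGap b).comp_max_of_isMinOn (hf.isMinOn_tangentGap b))

theorem ConvexOn.linearizeBelow_le (hf : ConvexOn ℝ univ f) (b x : ℝ) :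
    linearizeBelow f b x ≤ f x := by
  rcases le_total x b with hxb | hbx
  · rw [linearizeBelow_eq_add_tangentGap, max_eq_right hxb, tangentGap_self, add_zero]
    exact hf.add_rightDeriv_mul_sub_le b x
  · exact (linearizeBelow_of_le hbx).le

theorem Antitone.antitone_linearizeBelow (hfa : Antitone f) (b : ℝ) :
    Antitone (linearizeBelow f b) := fun x y hxy =>
  add_le_add (hfa (max_le_max_right b hxy)) <|
    mul_le_mul_of_nonpos_left (by gcongr) ((hfa.antitoneOn _).derivWithin_nonpos)

theorem Antitone.linearizeBelow_nonneg (hfa : Antitone f) (hf0 : ∀ x, 0 ≤ f x) (b x : ℝ) :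
    0 ≤ linearizeBelow f b x :=
  add_nonneg (hf0 _) <| mul_nonneg_of_nonpos_of_nonpos ((hfa.antitoneOn _).derivWithin_nonpos)
    (by simp)

end TangentGap

section RestrictEq

variable {α : Type*} [MeasurableSpace α] {μ ν : Measure α} {s : Set α} {g : α → ℝ}

theorem integral_eq_of_restrict_eq (hμν : μ.restrict s = ν.restrict s) (hg : ∀ x ∉ s, g x = 0) :
    ∫ x, g x ∂μ = ∫ x, g x ∂ν := by
  rw [← setIntegral_eq_integral_of_forall_compl_eq_zero hg, hμν,
    setIntegral_eq_integral_of_forall_compl_eq_zero hg]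

theorem MeasureTheory.Integrable.of_restrict_eq (hgμ : Integrable g μ)
    (hμν : μ.restrict s = ν.restrict s) (hg : ∀ x ∉ s, g x = 0) : Integrable g ν :=
  IntegrableOn.integrable_of_forall_notMem_eq_zero
    (by rw [IntegrableOn, ← hμν]; exact hgμ.restrict) hg

theorem tendsto_integral_max_atBot (hg : Integrable g μ) :
    Tendsto (fun t => ∫ x, max (g x) t ∂μ) atBot (𝓝 (∫ x, g x ∂μ)) := by
  refine tendsto_integral_filter_of_dominated_convergence (fun x => |g x|)
    (Eventually.of_forall fun t => hg.aestronglyMeasurable.sup aestronglyMeasurable_const)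
    ?_ hg.abs (ae_of_all _ fun x => ?_)
  · filter_upwards [eventually_le_atBot 0] with t ht
    refine ae_of_all _ fun x => ?_
    rw [Real.norm_eq_abs]
    rcases le_total (g x) t with hgt | htg
    · rw [max_eq_right hgt]
      exact abs_le_abs_of_nonpos ht hgt
    · rw [max_eq_left htg]
  · exact tendsto_const_nhds.congr' <| by
      filter_upwards [eventually_le_atBot (g x)] with t ht using (max_eq_left ht).symm

end RestrictEq

section MemM

variable {ρ : Measure ℝ} {f : ℝ → ℝ}

theorem MemM.of_le {ν : Measure ℝ} (hν : MemM ν) (h : ρ ≤ ν) : MemM ρ :=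
  have := hν.1
  ⟨isFiniteMeasure_of_le ν h, hν.2.mono_measure h⟩

theorem MemM.integrable_of_abs_le (hρ : MemM ρ) {g : ℝ → ℝ} (hg : AEStronglyMeasurable g ρ)
    (C D : ℝ) (hbound : ∀ x, |g x| ≤ C + D * |x|) : Integrable g ρ :=
  have := hρ.1
  ((integrable_const C).add (hρ.2.abs.const_mul D)).mono' hg (ae_of_all _ hbound)

theorem MemM.integrable_max_sub (hρ : MemM ρ) (q : ℝ) : Integrable (fun x => max (q - x) 0) ρ :=
  hρ.integrable_of_abs_le (by fun_prop) |q| 1 fun x => by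
    rw [abs_of_nonneg (le_max_right _ _), one_mul]
    exact max_le ((le_abs_self _).trans (abs_sub q x)) (by positivity)

theorem Antitone.integrable_comp_min (hfa : Antitone f) [IsFiniteMeasure ρ] (hf : Integrable f ρ)
    (q : ℝ) : Integrable (fun x => f (min x q)) ρ :=
  (hf.sup (integrable_const (f q))).congr (ae_of_all _ fun x => by simp [hfa.map_min])

theorem MemM.integrable_tangentGap_min (hρ : MemM ρ) {q : ℝ}
    (hf : Integrable (fun x => f (min x q)) ρ) :
    Integrable (fun x => tangentGap f q (min x q)) ρ := by
  have := hρ.1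
  refine ((hf.sub (integrable_const (f q))).add
    ((hρ.integrable_max_sub q).const_mul (derivWithin f (Ioi q) q))).congr (ae_of_all _ fun x => ?_)
  simp only [Pi.add_apply, Pi.sub_apply]
  linarith [comp_min_eq_add_tangentGap f q x]

theorem MemM.integral_comp_min_eq (hρ : MemM ρ) {q : ℝ}
    (hf : Integrable (fun x => f (min x q)) ρ) :
    ∫ x, f (min x q) ∂ρ = f q * ρ.real univ - derivWithin f (Ioi q) q * ∫ x, max (q - x) 0 ∂ρ +
      ∫ x, tangentGap f q (min x q) ∂ρ := by
  have := hρ.1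
  set s := derivWithin f (Ioi q) q
  have hsc : Integrable (fun x => s * max (q - x) 0) ρ := (hρ.integrable_max_sub q).const_mul s
  calc ∫ x, f (min x q) ∂ρ = ∫ x, (f q - s * max (q - x) 0) + tangentGap f q (min x q) ∂ρ :=
        integral_congr_ae (ae_of_all _ (comp_min_eq_add_tangentGap f q))
    _ = _ := by
      rw [integral_add (f := fun x => f q - s * max (q - x) 0) ((integrable_const _).sub hsc)
          (hρ.integrable_tangentGap_min hf),
        integral_sub (integrable_const _) hsc, integral_const, integral_const_mul, smul_eq_mul,
        mul_comm]

theorem MemM.integrable_linearizeBelow (hρ : MemM ρ) (hf0 : ∀ x, 0 ≤ f x)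
    (hfc : ConvexOn ℝ univ f) (hfa : Antitone f) (b : ℝ) : Integrable (linearizeBelow f b) ρ := by
  set s := derivWithin f (Ioi b) b
  refine hρ.integrable_of_abs_le (hfc.convexOn_linearizeBelow b).continuous.aestronglyMeasurable
    (f b + |s| * |b|) |s| fun x => ?_
  have hgap : |min x b - b| ≤ |x| + |b| := by
    rcases le_total x b with hxb | hbx
    · rw [min_eq_left hxb]
      exact abs_sub x b
    · simp [min_eq_right hbx]
      positivity
  rw [abs_of_nonneg (hfa.linearizeBelow_nonneg hf0 b x)]
  calc linearizeBelow f b x ≤ f b + |s| * |min x b - b| :=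
        add_le_add (hfa (le_max_right x b)) ((le_abs_self _).trans (abs_mul _ _).le)
    _ ≤ f b + |s| * |b| + |s| * |x| := by nlinarith [abs_nonneg s]

theorem tendsto_integral_linearizeBelow (hf0 : ∀ x, 0 ≤ f x) (hfc : ConvexOn ℝ univ f)
    (hfa : Antitone f) (hf : Integrable f ρ) :
    Tendsto (fun b => ∫ x, linearizeBelow f b x ∂ρ) atBot (𝓝 (∫ x, f x ∂ρ)) := by
  refine tendsto_integral_filter_of_dominated_convergence f
    (Eventually.of_forall fun b => (hfc.convexOn_linearizeBelow b).continuous.aestronglyMeasurable)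
    (Eventually.of_forall fun b => ae_of_all _ fun x => ?_) hf (ae_of_all _ fun x => ?_)
  · rw [Real.norm_eq_abs, abs_of_nonneg (hfa.linearizeBelow_nonneg hf0 b x)]
    exact hfc.linearizeBelow_le b x
  · exact tendsto_const_nhds.congr' <| by
      filter_upwards [eventually_le_atBot x] with b hb using (linearizeBelow_of_le hb).symm

end MemM

section LowerPart

variable {ν : Measure ℝ}

theorem measure_Iio_le_of_forall_lt {q : ℝ} {m : ℝ≥0∞} (h : ∀ t < q, ν (Iic t) ≤ m) :
    ν (Iio q) ≤ m := by
  obtain ⟨u, hu_mono, hu_lt, hu_lim⟩ := exists_seq_strictMono_tendsto q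
  have hunion : ⋃ n, Iic (u n) = Iio q := by
    ext x
    simp only [mem_iUnion, mem_Iic, mem_Iio]
    exact ⟨fun ⟨n, hn⟩ => hn.trans_lt (hu_lt n),
      fun hx => ((hu_lim.eventually (lt_mem_nhds hx)).exists).imp fun _ => le_of_lt⟩
  have hmono : Monotone fun n => Iic (u n) := fun i j hij => Iic_subset_Iic.2 (hu_mono.monotone hij)
  rw [← hunion, hmono.measure_iUnion]
  exact iSup_le fun n => h _ (hu_lt n)

theorem le_measure_Iic_of_forall_gt [IsFiniteMeasure ν] {q : ℝ} {m : ℝ≥0∞}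
    (h : ∀ t > q, m ≤ ν (Iic t)) : m ≤ ν (Iic q) := by
  obtain ⟨u, hu_anti, hu_gt, hu_lim⟩ := exists_seq_strictAnti_tendsto q
  have hinter : ⋂ n, Iic (u n) = Iic q := by
    ext x
    simp only [mem_iInter, mem_Iic]
    exact ⟨fun hx => ge_of_tendsto' hu_lim hx, fun hx n => hx.trans (hu_gt n).le⟩
  have hanti : Antitone fun n => Iic (u n) := fun i j hij => Iic_subset_Iic.2 (hu_anti.antitone hij)
  rw [← hinter, hanti.measure_iInter (fun n => measurableSet_Iic.nullMeasurableSet)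
    ⟨0, measure_ne_top _ _⟩]
  exact le_iInf fun n => h _ (hu_gt n)

theorem exists_measure_Iio_le_le_measure_Iic [IsFiniteMeasure ν] {m : ℝ≥0∞} (hm0 : m ≠ 0)
    (hm : m < ν univ) : ∃ q, ν (Iio q) ≤ m ∧ m ≤ ν (Iic q) := by
  set S := {t | m ≤ ν (Iic t)}
  have hS : S.Nonempty :=
    ((tendsto_measure_Iic_atTop ν).eventually (lt_mem_nhds hm)).exists.imp fun _ => le_of_lt
  have hbot : Tendsto (fun t => ν (Iic t)) atBot (𝓝 0) := by
    have hempty : ⋂ t : ℝ, Iic t = ∅ := iInter_Iic_eq_empty_iff.2 (by simp [not_bddBelow_univ])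
    have := tendsto_measure_iInter_atBot (μ := ν)
      (fun t => measurableSet_Iic.nullMeasurableSet) monotone_Iic ⟨0, measure_ne_top _ _⟩
    rwa [hempty, measure_empty] at this
  obtain ⟨t₀, ht₀⟩ := (hbot.eventually (gt_mem_nhds (pos_iff_ne_zero.2 hm0))).exists
  have hSbdd : BddBelow S := ⟨t₀, fun t ht => le_of_not_gt fun htt₀ =>
    (ht.trans (measure_mono (Iic_subset_Iic.2 htt₀.le))).not_gt ht₀⟩
  refine ⟨sInf S, measure_Iio_le_of_forall_lt fun t ht => ?_,
    le_measure_Iic_of_forall_gt fun t ht => ?_⟩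
  · exact le_of_lt (not_le.1 (notMem_of_lt_csInf ht hSbdd : t ∉ S))
  · obtain ⟨u, huS, hut⟩ := exists_lt_of_csInf_lt hS ht
    exact huS.trans (measure_mono (Iic_subset_Iic.2 hut.le))

/-- The part of `ν` of mass `m` lying furthest to the left: `ν` on `(-∞, q)` plus an atom at `q`. -/
theorem exists_le_restrict_Iio_eq [IsFiniteMeasure ν] {m : ℝ≥0∞} (hm0 : m ≠ 0)
    (hm : m < ν univ) : ∃ q, ∃ η ≤ ν, η univ = m ∧ η.restrict (Iio q) = ν.restrict (Iio q) ∧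
      η (Ioi q) = 0 := by
  obtain ⟨q, hIio, hIic⟩ := exists_measure_Iio_le_le_measure_Iic hm0 hm
  have hsplit : ν.restrict (Iio q) + ν.restrict {q} = ν.restrict (Iic q) := by
    rw [← Measure.restrict_union (by simp) (measurableSet_singleton q), Iio_union_right]
  have hatom : m - ν (Iio q) ≤ ν {q} := by
    have h := congrArg (fun ρ : Measure ℝ => ρ univ) hsplit
    simp only [Measure.add_apply, Measure.restrict_apply_univ] at h
    rwa [tsub_le_iff_left, h]
  refine ⟨q, ν.restrict (Iio q) + (m - ν (Iio q)) • Measure.dirac q, ?_, ?_, ?_, ?_⟩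
  · calc ν.restrict (Iio q) + (m - ν (Iio q)) • Measure.dirac q
          ≤ ν.restrict (Iio q) + ν.restrict {q} := by
            rw [Measure.restrict_singleton]
            gcongr
      _ ≤ ν := hsplit ▸ Measure.restrict_le_self
  · simp [add_tsub_cancel_of_le hIio]
  · have : (Measure.dirac q).restrict (Iio q) = 0 := Measure.restrict_eq_zero.2 (by simp)
    simp [Measure.restrict_add, Measure.restrict_smul, this]
  · simp [Ioi_inter_Iio]

end LowerPart

section Orders

variable {μ ν η χ : Measure ℝ}

theorem measure_univ_le_of_lePCD [IsFiniteMeasure μ] [IsFiniteMeasure ν] (h : LePCD μ ν) :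
    μ univ ≤ ν univ := by
  have := h (fun _ => 1) (fun _ => zero_le_one) (convexOn_const 1 convex_univ) antitone_const
    (integrable_const 1) (integrable_const 1)
  simpa [measureReal_def, ENNReal.toReal_le_toReal] using this

theorem leCD_of_lePCD_of_measure_univ_eq [IsFiniteMeasure μ] [IsFiniteMeasure ν]
    (h : LePCD μ ν) (hmass : μ univ = ν univ) : LeCD μ ν := by
  intro f hfc hfa hfμ hfν
  have htrunc : ∀ t, ∫ x, max (f x) t ∂μ ≤ ∫ x, max (f x) t ∂ν := by
    intro t
    have hμt : Integrable (fun x => max (f x) t) μ := hfμ.sup (integrable_const t)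
    have hνt : Integrable (fun x => max (f x) t) ν := hfν.sup (integrable_const t)
    have := h (fun x => max (f x) t - t) (fun x => sub_nonneg.2 (le_max_right _ _))
      ((hfc.sup (convexOn_const t convex_univ)).sub (concaveOn_const t convex_univ))
      (fun x y hxy => sub_le_sub_right (max_le_max_right t (hfa hxy)) t)
      (hμt.sub (integrable_const t)) (hνt.sub (integrable_const t))
    rwa [integral_sub hμt (integrable_const t), integral_sub hνt (integrable_const t),
      integral_const, integral_const, measureReal_def, measureReal_def, hmass,
      sub_le_sub_iff_right] at this
  exact le_of_tendsto_of_tendsto' (tendsto_integral_max_atBot hfμ)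
    (tendsto_integral_max_atBot hfν) htrunc

theorem LePCD.integral_le_of_restrict_eq {s : Set ℝ} (h : LePCD μ ν)
    (hην : η.restrict s = ν.restrict s) {φ : ℝ → ℝ} (hφ0 : ∀ x, 0 ≤ φ x)
    (hφc : ConvexOn ℝ univ φ) (hφa : Antitone φ) (hφs : ∀ x ∉ s, φ x = 0)
    (hφμ : Integrable φ μ) (hφη : Integrable φ η) : ∫ x, φ x ∂μ ≤ ∫ x, φ x ∂η :=
  (h φ hφ0 hφc hφa hφμ (hφη.of_restrict_eq hην hφs)).trans_eq
    (integral_eq_of_restrict_eq hην hφs).symm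

theorem leCD_of_lePCD_of_restrict_Iio_eq {q : ℝ} (hμ : MemM μ) (hη : MemM η) (h : LePCD μ ν)
    (hmass : η univ = μ univ) (hIio : η.restrict (Iio q) = ν.restrict (Iio q))
    (hIoi : η (Ioi q) = 0) : LeCD μ η := by
  have := hμ.1
  have := hη.1
  intro f hfc hfa hfμ hfη
  set s := derivWithin f (Ioi q) q
  have hs : s ≤ 0 := (hfa.antitoneOn _).derivWithin_nonpos
  have hfμq := hfa.integrable_comp_min hfμ q
  have hfηq := hfa.integrable_comp_min hfη q
  have hc_le : ∫ x, max (q - x) 0 ∂μ ≤ ∫ x, max (q - x) 0 ∂η :=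
    h.integral_le_of_restrict_eq hIio (fun x => le_max_right _ _)
      ((convexOn_const q convex_univ).sub (concaveOn_id convex_univ) |>.sup
        (convexOn_const 0 convex_univ))
      (fun x y hxy => max_le_max_right 0 (sub_le_sub_left hxy q))
      (fun x hx => by rw [mem_Iio, not_lt] at hx; exact max_eq_right (sub_nonpos.2 hx))
      (hμ.integrable_max_sub q) (hη.integrable_max_sub q)
  have hgap_le : ∫ x, tangentGap f q (min x q) ∂μ ≤ ∫ x, tangentGap f q (min x q) ∂η :=
    h.integral_le_of_restrict_eq hIio (fun x => hfc.tangentGap_nonneg q _)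
      ((hfc.convexOn_tangentGap q).comp_min_of_isMinOn (hfc.isMinOn_tangentGap q))
      (hfc.antitone_tangentGap_min q) (fun x hx => tangentGap_min_of_notMem_Iio hx)
      (hμ.integrable_tangentGap_min hfμq) (hη.integrable_tangentGap_min hfηq)
  have hη_le : ∀ᵐ x ∂η, x ≤ q := by
    rw [ae_iff]
    simp only [not_le]
    exact hIoi
  calc ∫ x, f x ∂μ ≤ ∫ x, f (min x q) ∂μ := integral_mono hfμ hfμq fun x => hfa (min_le_left x q)
    _ = f q * μ.real univ - s * ∫ x, max (q - x) 0 ∂μ + ∫ x, tangentGap f q (min x q) ∂μ :=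
      hμ.integral_comp_min_eq hfμq
    _ ≤ f q * η.real univ - s * ∫ x, max (q - x) 0 ∂η + ∫ x, tangentGap f q (min x q) ∂η := by
      rw [measureReal_def, measureReal_def, hmass]
      linarith [mul_le_mul_of_nonpos_left hc_le hs]
    _ = ∫ x, f (min x q) ∂η := (hη.integral_comp_min_eq hfηq).symm
    _ = ∫ x, f x ∂η := integral_congr_ae <| hη_le.mono fun x hx => by simp [min_eq_left hx]

theorem exists_leCD_le_of_lePCD (hμ : MemM μ) (hν : MemM ν) (h : LePCD μ ν) :
    ∃ η, MemM η ∧ LeCD μ η ∧ η ≤ ν := by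
  have := hμ.1
  have := hν.1
  rcases (measure_univ_le_of_lePCD h).eq_or_lt with hmass | hlt
  · exact ⟨ν, hν, leCD_of_lePCD_of_measure_univ_eq h hmass, le_rfl⟩
  rcases eq_or_ne μ 0 with rfl | hμ0
  · exact ⟨0, hν.of_le (Measure.zero_le ν), fun _ _ _ _ _ => le_rfl, Measure.zero_le ν⟩
  obtain ⟨q, η, hην, hmass, hIio, hIoi⟩ :=
    exists_le_restrict_Iio_eq (Measure.measure_univ_ne_zero.2 hμ0) hlt
  have hη := hν.of_le hην
  exact ⟨η, hη, leCD_of_lePCD_of_restrict_Iio_eq hμ hη h hmass hIio hIoi, hην⟩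

theorem lePCD_of_leCD_of_le (h : LeCD μ η) (hην : η ≤ ν) : LePCD μ ν := by
  intro f hf0 hfc hfa hfμ hfν
  calc ∫ x, f x ∂μ ≤ ∫ x, f x ∂η := h f hfc hfa hfμ (hfν.mono_measure hην)
    _ ≤ ∫ x, f x ∂ν := integral_mono_measure hην (ae_of_all _ hf0) hfν

theorem exists_le_leCD_of_leCD_of_le (hμ : MemM μ) (hν : MemM ν) (h : LeCD μ η) (hην : η ≤ ν) :
    ∃ χ, MemM χ ∧ μ ≤ χ ∧ LeCD χ ν := by
  have := hμ.1
  have hsub : MemM (ν - η) := hν.of_le Measure.sub_le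
  have := hsub.1
  have := (hν.of_le hην).1
  refine ⟨μ + (ν - η), ⟨inferInstance, hμ.2.add_measure hsub.2⟩, Measure.le_add_right le_rfl, ?_⟩
  intro f hfc hfa hfχ hfν
  have hfμ := hfχ.mono_measure (Measure.le_add_right le_rfl)
  have hfsub := hfχ.mono_measure (Measure.le_add_left le_rfl)
  have hfη := hfν.mono_measure hην
  calc ∫ x, f x ∂(μ + (ν - η)) = ∫ x, f x ∂μ + ∫ x, f x ∂(ν - η) := integral_add_measure hfμ hfsub
    _ ≤ ∫ x, f x ∂η + ∫ x, f x ∂(ν - η) := add_le_add_left (h f hfc hfa hfμ hfη) _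
    _ = ∫ x, f x ∂ν := by
      rw [add_comm, ← integral_add_measure hfsub hfη, Measure.sub_add_cancel_of_le hην]

theorem lePCD_of_le_of_leCD (hχ : MemM χ) (hμχ : μ ≤ χ) (h : LeCD χ ν) : LePCD μ ν := by
  intro f hf0 hfc hfa hfμ hfν
  refine le_of_tendsto_of_tendsto' (tendsto_integral_linearizeBelow hf0 hfc hfa hfμ)
    (tendsto_integral_linearizeBelow hf0 hfc hfa hfν) fun b => ?_
  have hχb := hχ.integrable_linearizeBelow hf0 hfc hfa b
  have hνb : Integrable (linearizeBelow f b) ν :=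
    hfν.mono' (hfc.convexOn_linearizeBelow b).continuous.aestronglyMeasurable <|
      ae_of_all _ fun x => by
        rw [Real.norm_eq_abs, abs_of_nonneg (hfa.linearizeBelow_nonneg hf0 b x)]
        exact hfc.linearizeBelow_le b x
  calc ∫ x, linearizeBelow f b x ∂μ ≤ ∫ x, linearizeBelow f b x ∂χ :=
        integral_mono_measure hμχ (ae_of_all _ (hfa.linearizeBelow_nonneg hf0 b)) hχb
    _ ≤ ∫ x, linearizeBelow f b x ∂ν :=
        h _ (hfc.convexOn_linearizeBelow b) (hfa.antitone_linearizeBelow b) hχb hνb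

end Orders

/-- Lemma 3.2: characterisations of the positive convex-decreasing order. -/
theorem lePCD_iff_exists_intermediate
    (μ ν : MeasureTheory.Measure ℝ) (hμ : MemM μ) (hν : MemM ν) :
    (LePCD μ ν ↔ ∃ η : MeasureTheory.Measure ℝ, MemM η ∧ LeCD μ η ∧
      ∀ A : Set ℝ, MeasurableSet A → η A ≤ ν A) ∧
    (LePCD μ ν ↔ ∃ χ : MeasureTheory.Measure ℝ, MemM χ ∧
      (∀ A : Set ℝ, MeasurableSet A → μ A ≤ χ A) ∧ LeCD χ ν) := by
  simp only [← Measure.le_iff]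
  refine ⟨⟨exists_leCD_le_of_lePCD hμ hν, fun ⟨η, _, hμη, hην⟩ => lePCD_of_leCD_of_le hμη hην⟩,
    ⟨fun h => ?_, fun ⟨χ, hχ, hμχ, hχν⟩ => lePCD_of_le_of_leCD hχ hμχ hχν⟩⟩
  obtain ⟨η, -, hμη, hην⟩ := exists_leCD_le_of_lePCD hμ hν h
  exact exists_le_leCD_of_leCD_of_le hμ hν hμη hην
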